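/- arXiv:1512.03484 — 2 statements merged into one kernel-verified Lean document; each statement's English description precedes it below -/
import Mathlib

section
/- For every integer k ≥ 2, the optimal makespan of the instance I_k equals 3k: there is an allocation of I_k with makespan 3k, and every allocation of I_k to its k+1 machines has makespan at least 3k. -/
open Finset

/-- The load of machine `j` under allocation `A`: the sum of weights of jobs assigned to `j`. -/
noncomputable def load (n m : ℕ) (w : Fin n → ℝ) (A : Fin n → Fin m) (j : Fin m) : ℝ :=
  ∑ i ∈ Finset.univ.filter (fun i => A i = j), w i

/-- The makespan of allocation `A`: the maximum machine load. -/
noncomputable def makespan (n m : ℕ) (w : Fin n → ℝ) (A : Fin n → Fin m) : ℝ :=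
  ⨆ j : Fin m, load n m w A j

/-- The potential of allocation `A`: the sum of squared machine loads. -/
noncomputable def potential (n m : ℕ) (w : Fin n → ℝ) (A : Fin n → Fin m) : ℝ :=
  ∑ j : Fin m, (load n m w A j) ^ 2

/-- The optimal makespan of the instance: the minimum makespan over all allocations. -/
noncomputable def optMakespan (n m : ℕ) (w : Fin n → ℝ) : ℝ :=
  ⨅ B : Fin n → Fin m, makespan n m w B

/-- The weights of the instance `I_k`: three jobs of weight `k`, two jobs of weight `j`
for each `k+1 ≤ j ≤ 2k−1`, and one job of weight `(5k−1)/2`. -/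
noncomputable def wIk (k : ℕ) : Fin (2 * k + 2) → ℝ := fun i =>
  if (i : ℕ) < k then (k : ℝ) + (i : ℕ)
  else if (i : ℕ) < 2 * k then (k : ℝ) + (((i : ℕ) - k : ℕ) : ℝ)
  else if (i : ℕ) = 2 * k then (k : ℝ)
  else (5 * (k : ℝ) - 1) / 2

lemma wIk_ge (k : ℕ) (hk : 2 ≤ k) (i : Fin (2 * k + 2)) : (k : ℝ) ≤ wIk k i := by
  have h1 : (1 : ℝ) ≤ (k : ℝ) := by exact_mod_cast (by omega : 1 ≤ k)
  unfold wIk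
  split_ifs with h2 h3 h4
  · have : (0 : ℝ) ≤ ((i : ℕ) : ℝ) := Nat.cast_nonneg _
    linarith
  · have : (0 : ℝ) ≤ (((i : ℕ) - k : ℕ) : ℝ) := Nat.cast_nonneg _
    linarith
  · exact le_refl _
  · linarith

lemma wIk_nonneg (k : ℕ) (hk : 2 ≤ k) (i : Fin (2 * k + 2)) : 0 ≤ wIk k i := by
  have := wIk_ge k hk i
  have : (0 : ℝ) ≤ (k : ℝ) := Nat.cast_nonneg _
  linarith [wIk_ge k hk i]

lemma load_bddAbove (n m : ℕ) (w : Fin n → ℝ) (A : Fin n → Fin m) :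
    BddAbove (Set.range (load n m w A)) := Set.Finite.bddAbove (Set.finite_range _)

/-- The optimal allocation. -/
def Aopt (k : ℕ) (hk : 2 ≤ k) : Fin (2 * k + 2) → Fin (k + 1) := fun i =>
  if (i : ℕ) = 0 ∨ (i : ℕ) = k ∨ (i : ℕ) = 2 * k then ⟨k, by omega⟩
  else if (i : ℕ) = 2 * k + 1 then ⟨k - 1, by omega⟩
  else if h : (i : ℕ) < k then ⟨(i : ℕ) - 1, by omega⟩
  else ⟨2 * k - (i : ℕ) - 1, by omega⟩

lemma load_Aopt (k : ℕ) (hk : 2 ≤ k) (j : Fin (k + 1)) :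
    load (2 * k + 2) (k + 1) (wIk k) (Aopt k hk) j =
      if (j : ℕ) = k then 3 * (k : ℝ)
      else if (j : ℕ) = k - 1 then (5 * (k : ℝ) - 1) / 2
      else 3 * (k : ℝ) := by
  rcases Nat.lt_or_ge (j : ℕ) (k - 1) with hj | hj
  · -- pair machine: jobs j+1 and 2k-1-j
    have hfilt : (Finset.univ.filter (fun i => Aopt k hk i = j)) =
        ({⟨(j : ℕ) + 1, by omega⟩, ⟨2 * k - 1 - (j : ℕ), by omega⟩} : Finset (Fin (2 * k + 2))) := by
      ext i
      simp only [Finset.mem_filter, Finset.mem_univ, true_and, Finset.mem_insert,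
        Finset.mem_singleton, Aopt, Fin.ext_iff]
      split_ifs <;> simp only [Fin.ext_iff] <;> omega
    rw [load, hfilt]
    have hne : (⟨(j : ℕ) + 1, by omega⟩ : Fin (2 * k + 2)) ≠ ⟨2 * k - 1 - (j : ℕ), by omega⟩ := by
      simp only [ne_eq, Fin.ext_iff]; omega
    rw [Finset.sum_pair hne]
    have hw1 : wIk k ⟨(j : ℕ) + 1, by omega⟩ = (k : ℝ) + ((j : ℕ) + 1 : ℕ) := by
      unfold wIk
      rw [if_pos (by simpa using (by omega : (j : ℕ) + 1 < k))]
    have hw2 : wIk k ⟨2 * k - 1 - (j : ℕ), by omega⟩ = (k : ℝ) + ((k - 1 - (j : ℕ) : ℕ) : ℝ) := by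
      unfold wIk
      rw [if_neg (by simp; omega), if_pos (by simp; omega)]
      congr 2
      simp only [Fin.val_mk]
      omega
    rw [hw1, hw2, if_neg (by omega), if_neg (by omega)]
    rw [Nat.cast_sub (by omega : (j : ℕ) ≤ k - 1), Nat.cast_sub (by omega : 1 ≤ k)]
    push_cast
    ring
  · rcases Nat.lt_or_ge (j : ℕ) k with hjk | hjk
    · -- machine k-1: big job
      have hj1 : (j : ℕ) = k - 1 := by omega
      have hfilt : (Finset.univ.filter (fun i => Aopt k hk i = j)) =
          ({⟨2 * k + 1, by omega⟩} : Finset (Fin (2 * k + 2))) := by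
        ext i
        simp only [Finset.mem_filter, Finset.mem_univ, true_and, Finset.mem_singleton,
          Aopt, Fin.ext_iff]
        split_ifs <;> simp only [Fin.ext_iff] <;> omega
      rw [load, hfilt, Finset.sum_singleton]
      have hw : wIk k ⟨2 * k + 1, by omega⟩ = (5 * (k : ℝ) - 1) / 2 := by
        unfold wIk
        rw [if_neg (by simp only [Fin.val_mk]; omega), if_neg (by simp only [Fin.val_mk]; omega),
          if_neg (by simp only [Fin.val_mk]; omega)]
      rw [hw, if_neg (by omega), if_pos hj1]
    · -- machine k: the three jobs of weight k
      have hj1 : (j : ℕ) = k := by omega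
      have hfilt : (Finset.univ.filter (fun i => Aopt k hk i = j)) =
          ({⟨0, by omega⟩, ⟨k, by omega⟩, ⟨2 * k, by omega⟩} : Finset (Fin (2 * k + 2))) := by
        ext i
        simp only [Finset.mem_filter, Finset.mem_univ, true_and, Finset.mem_insert,
          Finset.mem_singleton, Aopt, Fin.ext_iff]
        split_ifs <;> simp only [Fin.ext_iff] <;> omega
      rw [load, hfilt]
      rw [Finset.sum_insert (by
          simp only [Finset.mem_insert, Finset.mem_singleton, Fin.ext_iff]; push_neg; omega),
        Finset.sum_pair (Fin.ne_of_val_ne (by simp only [Fin.val_mk]; omega))]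
      have hw0 : wIk k ⟨0, by omega⟩ = (k : ℝ) := by
        unfold wIk
        rw [if_pos (by simp; omega)]
        simp
      have hwk : wIk k ⟨k, by omega⟩ = (k : ℝ) := by
        unfold wIk
        rw [if_neg (by simp), if_pos (by simp; omega)]
        simp
      have hw2k : wIk k ⟨2 * k, by omega⟩ = (k : ℝ) := by
        unfold wIk
        rw [if_neg (by simp; omega), if_neg (by simp), if_pos (by simp)]
      rw [hw0, hwk, hw2k, if_pos hj1]
      ring

/-- For every `k ≥ 2`, the optimal makespan of `I_k` equals `3k`: some
allocation achieves makespan `3k`, and every allocation has makespan at least `3k`. -/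
theorem Ik_opt_makespan (k : ℕ) (hk : 2 ≤ k) :
    (∃ A : Fin (2 * k + 2) → Fin (k + 1),
      makespan (2 * k + 2) (k + 1) (wIk k) A = 3 * (k : ℝ)) ∧
    (∀ A : Fin (2 * k + 2) → Fin (k + 1),
      3 * (k : ℝ) ≤ makespan (2 * k + 2) (k + 1) (wIk k) A) := by
  have hk1 : (1 : ℝ) ≤ (k : ℝ) := by exact_mod_cast (by omega : 1 ≤ k)
  constructor
  · refine ⟨Aopt k hk, ?_⟩
    apply le_antisymm
    · apply ciSup_le
      intro j
      rw [load_Aopt k hk j]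
      split_ifs
      · exact le_refl _
      · linarith
      · exact le_refl _
    · have h := le_ciSup (load_bddAbove (2 * k + 2) (k + 1) (wIk k) (Aopt k hk))
        (⟨k, by omega⟩ : Fin (k + 1))
      rw [load_Aopt k hk ⟨k, by omega⟩] at h
      simpa [makespan] using h
  · intro A
    set big : Fin (2 * k + 2) := ⟨2 * k + 1, by omega⟩ with hbig
    have hbigw : wIk k big = (5 * (k : ℝ) - 1) / 2 := by
      unfold wIk
      rw [if_neg (by simp only [hbig, Fin.val_mk]; omega),
        if_neg (by simp only [hbig, Fin.val_mk]; omega),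
        if_neg (by simp only [hbig, Fin.val_mk]; omega)]
    by_cases hex : ∃ i, i ≠ big ∧ A i = A big
    · obtain ⟨i, hne, hAi⟩ := hex
      have hsub : ({big, i} : Finset (Fin (2 * k + 2))) ⊆
          Finset.univ.filter (fun x => A x = A big) := by
        intro x hx
        simp only [Finset.mem_insert, Finset.mem_singleton] at hx
        rcases hx with rfl | rfl <;> simp [hAi]
      have hsum : ∑ x ∈ ({big, i} : Finset (Fin (2 * k + 2))), wIk k x ≤
          load (2 * k + 2) (k + 1) (wIk k) A (A big) :=
        Finset.sum_le_sum_of_subset_of_nonneg hsub (fun x _ _ => wIk_nonneg k hk x)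
      rw [Finset.sum_pair (Ne.symm hne)] at hsum
      have hi : (k : ℝ) ≤ wIk k i := wIk_ge k hk i
      have h3k : 3 * (k : ℝ) ≤ load (2 * k + 2) (k + 1) (wIk k) A (A big) := by
        rw [hbigw] at hsum; linarith
      exact le_trans h3k (le_ciSup (load_bddAbove _ _ _ _) (A big))
    · push_neg at hex
      have hmap : ∀ i ∈ Finset.univ.erase big, A i ∈ Finset.univ.erase (A big) := by
        intro i hi
        rw [Finset.mem_erase] at hi ⊢
        exact ⟨hex i hi.1, Finset.mem_univ _⟩
      have hcard : (Finset.univ.erase (A big)).card * 2 < (Finset.univ.erase big).card := by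
        rw [Finset.card_erase_of_mem (Finset.mem_univ _),
          Finset.card_erase_of_mem (Finset.mem_univ _)]
        simp only [Finset.card_univ, Fintype.card_fin]
        omega
      obtain ⟨j, _, hjc⟩ :=
        Finset.exists_lt_card_fiber_of_mul_lt_card_of_maps_to hmap hcard
      have hsub : ((Finset.univ.erase big).filter (fun i => A i = j)) ⊆
          Finset.univ.filter (fun i => A i = j) :=
        Finset.filter_subset_filter _ (Finset.subset_univ _)
      have hsum1 : ((Finset.univ.erase big).filter (fun i => A i = j)).card • (k : ℝ) ≤
          ∑ i ∈ (Finset.univ.erase big).filter (fun i => A i = j), wIk k i :=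
        Finset.card_nsmul_le_sum _ _ _ (fun i _ => wIk_ge k hk i)
      have hsum2 : ∑ i ∈ (Finset.univ.erase big).filter (fun i => A i = j), wIk k i ≤
          load (2 * k + 2) (k + 1) (wIk k) A j :=
        Finset.sum_le_sum_of_subset_of_nonneg hsub (fun x _ _ => wIk_nonneg k hk x)
      have hc3 : 3 ≤ ((Finset.univ.erase big).filter (fun i => A i = j)).card := hjc
      have hk0 : (0 : ℝ) ≤ (k : ℝ) := Nat.cast_nonneg _
      have h3k : 3 * (k : ℝ) ≤ load (2 * k + 2) (k + 1) (wIk k) A j := by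
        have : (3 : ℝ) * (k : ℝ) ≤
            (((Finset.univ.erase big).filter (fun i => A i = j)).card : ℝ) * (k : ℝ) := by
          apply mul_le_mul_of_nonneg_right _ hk0
          exact_mod_cast hc3
        rw [nsmul_eq_mul] at hsum1
        linarith
      exact le_trans h3k (le_ciSup (load_bddAbove _ _ _ _) j)
end

section
/- Let A be a potential-optimal allocation of an instance whose optimal makespan OPT equals 1. Suppose the maximum load of A is 1 + α with α > 1/3, attained on a machine (call it machine 1) that holds at least two jobs, and let α + β be the weight of the smallest job on machine 1 (i.e., β is defined as that weight minus α). Then 0 < β < α, and every machine under A either holds a job of weight at least 1 − β, or holds two jobs each of weight strictly greater than α. -/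
open Finset

section Helpers

variable {n m : ℕ}

lemma load_eq_sum_ite (w : Fin n → ℝ) (A : Fin n → Fin m) (k : Fin m) :
    load n m w A k = ∑ i, if A i = k then w i else 0 := by
  unfold load; rw [Finset.sum_filter]

lemma load_nonneg (w : Fin n → ℝ) (hw : ∀ i, 0 < w i) (A : Fin n → Fin m) (k : Fin m) :
    0 ≤ load n m w A k :=
  Finset.sum_nonneg fun i _ => (hw i).le

lemma sum_load (w : Fin n → ℝ) (A : Fin n → Fin m) :
    ∑ k, load n m w A k = ∑ i, w i := by
  unfold load; exact Finset.sum_fiberwise _ _ _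

lemma load_diff (w : Fin n → ℝ) (A B : Fin n → Fin m) (D : Finset (Fin n))
    (h : ∀ i ∉ D, B i = A i) (k : Fin m) :
    load n m w B k = load n m w A k +
      ∑ i ∈ D, ((if B i = k then w i else 0) - (if A i = k then w i else 0)) := by
  rw [load_eq_sum_ite, load_eq_sum_ite]
  have h0 : ∑ i ∈ D, ((if B i = k then w i else 0) - (if A i = k then w i else 0))
      = ∑ i, ((if B i = k then w i else 0) - (if A i = k then w i else 0)) := by
    apply Finset.sum_subset (Finset.subset_univ D)
    intro i _ hi
    rw [h i hi]; ring
  rw [h0, Finset.sum_sub_distrib]; ring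

lemma potential_diff (w : Fin n → ℝ) (A B : Fin n → Fin m) (K : Finset (Fin m))
    (h : ∀ k ∉ K, load n m w B k = load n m w A k) :
    potential n m w B = potential n m w A +
      ∑ k ∈ K, ((load n m w B k) ^ 2 - (load n m w A k) ^ 2) := by
  unfold potential
  have h0 : ∑ k ∈ K, ((load n m w B k) ^ 2 - (load n m w A k) ^ 2)
      = ∑ k, ((load n m w B k) ^ 2 - (load n m w A k) ^ 2) := by
    apply Finset.sum_subset (Finset.subset_univ K)
    intro k _ hk
    rw [h k hk]; ring
  rw [h0, Finset.sum_sub_distrib]; ring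

lemma move_potential (w : Fin n → ℝ) (A : Fin n → Fin m) (x : Fin n) (k : Fin m)
    (hk : k ≠ A x) :
    potential n m w (Function.update A x k) = potential n m w A
      + ((load n m w A k + w x) ^ 2 - (load n m w A k) ^ 2)
      + ((load n m w A (A x) - w x) ^ 2 - (load n m w A (A x)) ^ 2) := by
  set B := Function.update A x k with hB
  have hD : ∀ i ∉ ({x} : Finset (Fin n)), B i = A i := by
    intro i hi
    simp only [Finset.mem_singleton] at hi
    exact Function.update_of_ne hi _ _
  have hLd : ∀ q, load n m w B q = load n m w A q +
      ((if k = q then w x else 0) - (if A x = q then w x else 0)) := by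
    intro q
    rw [load_diff w A B {x} hD q, Finset.sum_singleton]
    have : B x = k := Function.update_self x k A
    rw [this]
  have hK : ∀ q, q ∉ ({k, A x} : Finset (Fin m)) → load n m w B q = load n m w A q := by
    intro q hq
    simp only [Finset.mem_insert, Finset.mem_singleton, not_or] at hq
    rw [hLd q, if_neg (fun h => hq.1 h.symm), if_neg (fun h => hq.2 h.symm)]
    ring
  rw [potential_diff w A B {k, A x} hK]
  rw [Finset.sum_insert (by simpa using hk), Finset.sum_singleton]
  rw [hLd k, hLd (A x)]
  rw [if_pos rfl, if_neg (fun h => hk h.symm), if_neg hk, if_pos rfl]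
  ring

end Helpers

/-- Lemma 1: Let `A` be potential optimal with `OPT = 1`, maximum load
`1 + α` with `α > 1/3` attained on machine `m1` holding at least two jobs, and let
`α + β` be the weight of the smallest job `s` on `m1`. Then `0 < β < α`, and every
machine holds a job of weight at least `1 − β` or two jobs of weight strictly
greater than `α`. -/
theorem high_jobs_lemma (n m : ℕ) (w : Fin n → ℝ) (hw : ∀ i, 0 < w i)
    (A : Fin n → Fin m)
    (hpo : ∀ B : Fin n → Fin m, potential n m w A ≤ potential n m w B)
    (hopt : optMakespan n m w = 1)
    (α : ℝ) (hα : 1 / 3 < α)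
    (m1 : Fin m)
    (hload : load n m w A m1 = 1 + α)
    (hmax : makespan n m w A = 1 + α)
    (htwo : ∃ i j : Fin n, i ≠ j ∧ A i = m1 ∧ A j = m1)
    (s : Fin n) (hs : A s = m1) (hsmin : ∀ i : Fin n, A i = m1 → w s ≤ w i)
    (β : ℝ) (hβ : w s = α + β) :
    0 < β ∧ β < α ∧
    ∀ j : Fin m,
      (∃ i : Fin n, A i = j ∧ 1 - β ≤ w i) ∨
      (∃ i i' : Fin n, i ≠ i' ∧ A i = j ∧ A i' = j ∧ α < w i ∧ α < w i') := by
  have hc_pos : 0 < w s := hw s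
  have _inst : Nonempty (Fin n → Fin m) := ⟨fun _ => m1⟩
  -- an optimal allocation
  obtain ⟨B₀, hB₀⟩ := Finite.exists_min (makespan n m w)
  have hms : makespan n m w B₀ = 1 := by
    apply le_antisymm
    · rw [← hopt]; exact le_ciInf hB₀
    · rw [← hopt]; exact ciInf_le (Set.finite_range _).bddBelow B₀
  have hB₀le : ∀ k, load n m w B₀ k ≤ 1 := by
    intro k
    rw [← hms]
    exact le_ciSup (Set.finite_range _).bddAbove k
  have hW : ∑ i, w i ≤ (m : ℝ) := by
    rw [← sum_load w B₀]
    calc ∑ k, load n m w B₀ k ≤ ∑ _k : Fin m, (1 : ℝ) :=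
          Finset.sum_le_sum fun k _ => hB₀le k
    _ = m := by simp
  have hWA : ∑ k, load n m w A k ≤ (m : ℝ) := by rw [sum_load]; exact hW
  -- Part 1: 0 < β
  have hβpos : 0 < β := by
    by_contra hb
    push_neg at hb
    obtain ⟨k, hk, hklt⟩ : ∃ k, k ≠ m1 ∧ load n m w A k < 1 := by
      by_contra hcon
      push_neg at hcon
      have hpt : ∀ k : Fin m, (1 : ℝ) + (if k = m1 then α else 0) ≤ load n m w A k := by
        intro k
        rcases eq_or_ne k m1 with rfl | hk
        · rw [if_pos rfl, hload]
        · rw [if_neg hk]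
          simpa using hcon k hk
      have hsum := Finset.sum_le_sum fun k (_ : k ∈ Finset.univ) => hpt k
      have e1 : ∑ k : Fin m, ((1 : ℝ) + (if k = m1 then α else 0)) = m + α := by
        rw [Finset.sum_add_distrib, Finset.sum_const,
          Finset.sum_ite_eq' Finset.univ m1 fun _ => α]
        simp
      rw [e1] at hsum
      have h3 : (0 : ℝ) < α := by linarith
      linarith
    have hmv := move_potential w A s k (by rw [hs]; exact hk)
    have hp := hpo (Function.update A s k)
    rw [hmv, hs, hload] at hp
    have hws : w s ≤ α := by linarith [hβ]
    nlinarith [mul_pos hc_pos (show (0:ℝ) < 1 + α - load n m w A k - w s by linarith),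
      load_nonneg w hw A k]
  -- Part 2: β < α
  obtain ⟨i1, i2, h12, hA1, hA2⟩ := htwo
  have hw1 : w s ≤ w i1 := hsmin _ hA1
  have hw2 : w s ≤ w i2 := hsmin _ hA2
  have hpair : w i1 + w i2 ≤ load n m w A m1 := by
    have hsub : ({i1, i2} : Finset (Fin n)) ⊆ Finset.univ.filter (fun i => A i = m1) := by
      intro i hi
      simp only [Finset.mem_insert, Finset.mem_singleton] at hi
      rcases hi with rfl | rfl <;> simp [hA1, hA2]
    have h := Finset.sum_le_sum_of_subset_of_nonneg hsub (fun i _ _ => (hw i).le)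
    rwa [Finset.sum_pair h12] at h
  have hβα : β < α := by
    rw [hload] at hpair
    linarith [hβ, hw1, hw2, hα]
  have hα1 : α < 1 := by
    rw [hload] at hpair
    linarith [hβ, hw1, hw2]
  refine ⟨hβpos, hβα, ?_⟩
  intro J
  by_contra hcon
  push_neg at hcon
  obtain ⟨h1, h2⟩ := hcon
  -- J ≠ m1
  have hJm1 : J ≠ m1 := by
    rintro rfl
    have ha1 : α < w i1 := by linarith [hβ, hw1]
    have ha2 : α < w i2 := by linarith [hβ, hw2]
    have := h2 i1 i2 h12 hA1 hA2 ha1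
    linarith
  set l : ℝ := load n m w A J with hl
  -- load of J is at least 1 - β
  have hF2 : 1 - β ≤ l := by
    have hmv := move_potential w A s J (by rw [hs]; exact hJm1)
    have hp := hpo (Function.update A s J)
    rw [hmv, hs, hload, ← hl] at hp
    by_contra hF2n
    push_neg at hF2n
    nlinarith [mul_pos hc_pos (show (0:ℝ) < 1 - β - l by linarith), hβ]
  -- a light machine different from m1 and J
  obtain ⟨khat, hk1, hk2, hklt⟩ : ∃ k, k ≠ m1 ∧ k ≠ J ∧ load n m w A k < 1 := by
    by_contra hcon2
    push_neg at hcon2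
    have hpt : ∀ k : Fin m,
        (1 : ℝ) + ((if k = m1 then α else 0) + (if k = J then -β else 0)) ≤
          load n m w A k := by
      intro k
      rcases eq_or_ne k m1 with rfl | hk
      · rw [if_pos rfl, if_neg (Ne.symm hJm1), hload]; linarith
      · rcases eq_or_ne k J with rfl | hk2
        · rw [if_neg hk, if_pos rfl, ← hl]; linarith
        · rw [if_neg hk, if_neg hk2]
          simpa using hcon2 k hk hk2
    have hsum := Finset.sum_le_sum fun k (_ : k ∈ Finset.univ) => hpt k
    have e1 : ∑ k : Fin m, ((1 : ℝ) + ((if k = m1 then α else 0) + (if k = J then -β else 0)))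
        = m + α - β := by
      rw [Finset.sum_add_distrib, Finset.sum_add_distrib, Finset.sum_const,
        Finset.sum_ite_eq' Finset.univ m1 fun _ => α,
        Finset.sum_ite_eq' Finset.univ J fun _ => -β]
      simp; ring
    rw [e1] at hsum
    linarith
  set lam : ℝ := load n m w A khat with hlam
  -- jobs on machine J
  set Jj : Finset (Fin n) := Finset.univ.filter (fun i => A i = J) with hJj
  have hlJ : l = ∑ i ∈ Jj, w i := rfl
  set Sm : Finset (Fin n) := Jj.filter (fun i => w i ≤ α) with hSm
  set Bg : Finset (Fin n) := Jj.filter (fun i => ¬ w i ≤ α) with hBg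
  have hsplitSB : ∑ i ∈ Sm, w i + ∑ i ∈ Bg, w i = l := by
    rw [hlJ]; exact Finset.sum_filter_add_sum_filter_not Jj _ w
  have hBgsum : ∑ i ∈ Bg, w i < 1 - β := by
    rcases Finset.eq_empty_or_nonempty Bg with he | hne
    · rw [he, Finset.sum_empty]; linarith
    · obtain ⟨i0, hi0⟩ := hne
      have hi0' := Finset.mem_filter.1 hi0
      have hi0J : A i0 = J := (Finset.mem_filter.1 hi0'.1).2
      have hBeq : Bg = {i0} := by
        apply Finset.eq_singleton_iff_unique_mem.2
        refine ⟨hi0, ?_⟩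
        intro x hx
        by_contra hxne
        have hx' := Finset.mem_filter.1 hx
        have hxJ : A x = J := (Finset.mem_filter.1 hx'.1).2
        have := h2 x i0 hxne hxJ hi0J (not_le.1 hx'.2)
        exact hi0'.2 this
      rw [hBeq, Finset.sum_singleton]
      exact h1 i0 hi0J
  have hy0 : l - 1 + β < ∑ i ∈ Sm, w i := by linarith
  -- maximal subset of jobs of J with weight at most u := l - 1 + β
  set u : ℝ := l - 1 + β with hu
  have hu0 : (0 : ℝ) ≤ u := by rw [hu]; linarith
  set P : Finset (Finset (Fin n)) := Jj.powerset.filter (fun t => ∑ i ∈ t, w i ≤ u) with hP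
  have hPne : P.Nonempty := by
    refine ⟨∅, ?_⟩
    rw [hP]
    refine Finset.mem_filter.2 ⟨Finset.empty_mem_powerset _, ?_⟩
    rw [Finset.sum_empty]; exact hu0
  obtain ⟨T₀, hT₀P, hT₀max⟩ := Finset.exists_max_image P (fun t => ∑ i ∈ t, w i) hPne
  have hT₀P' := Finset.mem_filter.1 hT₀P
  have hT₀Jj : T₀ ⊆ Jj := Finset.mem_powerset.1 hT₀P'.1
  set σ' : ℝ := ∑ i ∈ T₀, w i with hσ
  have hσu : σ' ≤ u := hT₀P'.2
  -- a small job of J not in T₀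
  have hSmT : ¬ Sm ⊆ T₀ := by
    intro hsub
    have h := Finset.sum_le_sum_of_subset_of_nonneg hsub (fun i _ _ => (hw i).le)
    rw [← hσ] at h
    linarith
  obtain ⟨a, haSm, haT₀⟩ := Finset.not_subset.1 hSmT
  have haSm' := Finset.mem_filter.1 haSm
  have haJ : A a = J := (Finset.mem_filter.1 haSm'.1).2
  have haα : w a ≤ α := haSm'.2
  have hwa : 0 < w a := hw a
  have has : a ≠ s := by
    intro h
    rw [h, hs] at haJ
    exact hJm1 haJ.symm
  have hsT₀ : s ∉ T₀ := by
    intro h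
    have : A s = J := (Finset.mem_filter.1 (hT₀Jj h)).2
    rw [hs] at this
    exact hJm1 this.symm
  have hSins : u < σ' + w a := by
    by_contra hle
    push_neg at hle
    have hmem : insert a T₀ ∈ P := by
      rw [hP]
      refine Finset.mem_filter.2 ⟨Finset.mem_powerset.2 ?_, ?_⟩
      · intro x hx
        rcases Finset.mem_insert.1 hx with rfl | hx'
        · exact Finset.mem_filter.1 haSm |>.1
        · exact hT₀Jj hx'
      · rw [Finset.sum_insert haT₀]; linarith
    have h := hT₀max _ hmem
    rw [Finset.sum_insert haT₀, ← hσ] at h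
    linarith
  -- the modified allocation: s goes to J, T₀ goes to m1, a goes to t
  set D : Finset (Fin n) := insert s (insert a T₀) with hD
  have hsD : s ∉ insert a T₀ := by
    simp only [Finset.mem_insert, not_or]
    exact ⟨Ne.symm has, hsT₀⟩
  have hloadBc : ∀ t k : Fin m,
      load n m w (fun i => if i = s then J else if i = a then t else if i ∈ T₀ then m1 else A i) k
        = load n m w A k
        + ((if J = k then w s else 0) - (if m1 = k then w s else 0))
        + ((if t = k then w a else 0) - (if J = k then w a else 0))
        + ((if m1 = k then σ' else 0) - (if J = k then σ' else 0)) := by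
    intro t k
    set Bc : Fin n → Fin m :=
      fun i => if i = s then J else if i = a then t else if i ∈ T₀ then m1 else A i with hBc
    have hDo : ∀ i ∉ D, Bc i = A i := by
      intro i hi
      rw [hD] at hi
      simp only [Finset.mem_insert, not_or] at hi
      rw [hBc]
      simp only [if_neg hi.1, if_neg hi.2.1, if_neg hi.2.2]
    rw [load_diff w A Bc D hDo k, hD]
    rw [Finset.sum_insert hsD, Finset.sum_insert haT₀]
    have hBs : Bc s = J := by rw [hBc]; simp
    have hBa : Bc a = t := by rw [hBc]; simp [has]
    have hTsum : ∑ i ∈ T₀, ((if Bc i = k then w i else 0) - (if A i = k then w i else 0))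
        = ∑ i ∈ T₀, ((if m1 = k then w i else 0) - (if J = k then w i else 0)) := by
      apply Finset.sum_congr rfl
      intro i hi
      have hiA : A i = J := (Finset.mem_filter.1 (hT₀Jj hi)).2
      have his : i ≠ s := by
        intro h; exact hsT₀ (h ▸ hi)
      have hia : i ≠ a := by
        intro h; exact haT₀ (h ▸ hi)
      have hBi : Bc i = m1 := by
        rw [hBc]; simp [his, hia, hi]
      rw [hBi, hiA]
    rw [hTsum, hBs, hBa, hs, haJ]
    have e1 : ∑ i ∈ T₀, ((if m1 = k then w i else 0) - (if J = k then w i else 0))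
        = (if m1 = k then σ' else 0) - (if J = k then σ' else 0) := by
      rw [Finset.sum_sub_distrib]
      congr 1
      · by_cases h : m1 = k <;> simp [h, hσ]
      · by_cases h : J = k <;> simp [h, hσ]
    rw [e1]
    ring
  -- case distinction
  rcases lt_or_ge (σ' + w a) (w s) with hcase | hcase
  · -- swap s with T₀ ∪ {a}: improving since u < σ' + w a < w s
    set Bc : Fin n → Fin m :=
      fun i => if i = s then J else if i = a then m1 else if i ∈ T₀ then m1 else A i with hBc
    have hK : ∀ k, k ∉ ({m1, J} : Finset (Fin m)) → load n m w Bc k = load n m w A k := by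
      intro k hk
      simp only [Finset.mem_insert, Finset.mem_singleton, not_or] at hk
      rw [hloadBc m1 k]
      rw [if_neg (fun h => hk.2 h.symm), if_neg (fun h => hk.1 h.symm),
        if_neg (fun h => hk.1 h.symm), if_neg (fun h => hk.2 h.symm),
        if_neg (fun h => hk.1 h.symm), if_neg (fun h => hk.2 h.symm)]
      ring
    have hLm1 : load n m w Bc m1 = (1 + α) - w s + w a + σ' := by
      rw [hloadBc m1 m1, hload]
      rw [if_neg hJm1, if_pos rfl, if_pos rfl, if_neg hJm1, if_pos rfl, if_neg hJm1]
      ring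
    have hLJ : load n m w Bc J = l + w s - w a - σ' := by
      rw [hloadBc m1 J, ← hl]
      rw [if_pos rfl, if_neg (fun h => hJm1 h.symm), if_neg (fun h => hJm1 h.symm),
        if_pos rfl, if_neg (fun h => hJm1 h.symm), if_pos rfl]
      ring
    have hpd := potential_diff w A Bc {m1, J} hK
    rw [Finset.sum_insert (by simpa using Ne.symm hJm1), Finset.sum_singleton] at hpd
    rw [hLm1, hLJ, hload, ← hl] at hpd
    have hp := hpo Bc
    rw [hpd] at hp
    have hE : (0:ℝ) ≤ ((1 + α) - w s + w a + σ') ^ 2 - (1 + α) ^ 2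
        + ((l + w s - w a - σ') ^ 2 - l ^ 2) := by linarith
    have hprod : 0 < (w s - σ' - w a) * (σ' + w a - u) := by
      apply mul_pos <;> linarith
    rw [hu] at hprod
    rw [hβ] at hE hprod
    have key : ((1 + α) - (α + β) + w a + σ') ^ 2 - (1 + α) ^ 2
        + (((l + (α + β) - w a - σ') ^ 2) - l ^ 2)
        = -2 * (((α + β) - σ' - w a) * (σ' + w a - (l - 1 + β))) := by ring
    linarith [key, hE, hprod]
  · -- composite move: s to J, T₀ to m1, a to khat
    set Bc : Fin n → Fin m :=
      fun i => if i = s then J else if i = a then khat else if i ∈ T₀ then m1 else A i with hBc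
    have hK : ∀ k, k ∉ ({m1, J, khat} : Finset (Fin m)) →
        load n m w Bc k = load n m w A k := by
      intro k hk
      simp only [Finset.mem_insert, Finset.mem_singleton, not_or] at hk
      rw [hloadBc khat k]
      rw [if_neg (fun h => hk.2.1 h.symm), if_neg (fun h => hk.1 h.symm),
        if_neg (fun h => hk.2.2 h.symm), if_neg (fun h => hk.2.1 h.symm),
        if_neg (fun h => hk.1 h.symm), if_neg (fun h => hk.2.1 h.symm)]
      ring
    have hLm1 : load n m w Bc m1 = (1 + α) - w s + σ' := by
      rw [hloadBc khat m1, hload]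
      rw [if_neg hJm1, if_pos rfl, if_neg hk1, if_neg hJm1, if_pos rfl, if_neg hJm1]
      ring
    have hLJ : load n m w Bc J = l + w s - w a - σ' := by
      rw [hloadBc khat J, ← hl]
      rw [if_pos rfl, if_neg (fun h => hJm1 h.symm), if_neg hk2,
        if_pos rfl, if_neg (fun h => hJm1 h.symm), if_pos rfl]
      ring
    have hLk : load n m w Bc khat = lam + w a := by
      rw [hloadBc khat khat, ← hlam]
      rw [if_neg (fun h => hk2 h.symm), if_neg (fun h => hk1 h.symm), if_pos rfl,
        if_neg (fun h => hk2 h.symm), if_neg (fun h => hk1 h.symm),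
        if_neg (fun h => hk2 h.symm)]
      ring
    have hKmem : m1 ∉ ({J, khat} : Finset (Fin m)) := by
      simp only [Finset.mem_insert, Finset.mem_singleton, not_or]
      exact ⟨Ne.symm hJm1, Ne.symm hk1⟩
    have hJmem : J ∉ ({khat} : Finset (Fin m)) := by
      simp only [Finset.mem_singleton]
      exact Ne.symm hk2
    have hpd := potential_diff w A Bc {m1, J, khat} hK
    rw [Finset.sum_insert hKmem, Finset.sum_insert hJmem, Finset.sum_singleton] at hpd
    rw [hLm1, hLJ, hLk, hload, ← hl, ← hlam] at hpd
    have hp := hpo Bc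
    rw [hpd] at hp
    have hE : (0:ℝ) ≤ ((1 + α) - w s + σ') ^ 2 - (1 + α) ^ 2
        + ((l + w s - w a - σ') ^ 2 - l ^ 2) + ((lam + w a) ^ 2 - lam ^ 2) := by linarith
    have hprod1 : 0 ≤ (u - σ') * (σ' + w a - w s) := by
      apply mul_nonneg <;> linarith
    have hprod2 : 0 < w a * (α + 1 - lam - w a) := by
      apply mul_pos hwa
      linarith
    rw [hu] at hprod1
    rw [hβ] at hE hprod1
    have key : ((1 + α) - (α + β) + σ') ^ 2 - (1 + α) ^ 2
        + ((l + (α + β) - w a - σ') ^ 2 - l ^ 2) + ((lam + w a) ^ 2 - lam ^ 2)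
        = -2 * (((l - 1 + β) - σ') * (σ' + w a - (α + β)) + w a * (α + 1 - lam - w a)) := by
      ring
    linarith [key, hE, hprod1, hprod2]
end
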